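/- arXiv:2510.23871 — 3 statements merged into one kernel-verified Lean document; each statement's English description precedes it below -/
import Mathlib

section
/- Let G be a finite group, I and Λ finite index sets, and P a regular Λ×I matrix with entries in G⁰ containing at least one zero entry. Then the commuting graph C(M⁰[G;I,Λ;P]) is connected if and only if all three of the following hold: (a) every row of P contains at least one zero entry; (b) every column of P contains at least one zero entry; (c) there do not exist subsets I' ⊆ I and Λ' ⊆ Λ with ∅ ≠ I' ≠ I and ∅ ≠ Λ' ≠ Λ such that p_{λi} ≠ 0 for all (i,λ) ∈ (I'×(Λ∖Λ')) ∪ ((I∖I')×Λ'). -/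
/-!
Write `i ~ λ` when `p_{λi} = 0`. Vertices `(i,x,λ)` and `(j,y,μ)` with `i ~ μ` and `j ~ λ` always
commute, and every other commuting pair of distinct vertices has `(i,λ) = (j,μ)`. Hence a
rectangle `I' × G × Λ'` closed under the first kind of step is a union of components, which
gives (a), (b) and (c).

Conversely, `(i,x,λ)` and `(i',x',λ')` are both joined to `(j,1,μ)` when `j ~ λ, λ'` and
`i, i' ~ μ`. So `λ` may move between two rows having a zero in a common column, and `i` between
two columns having a zero in a common row. These moves connect all rows: otherwise the class of
one row, together with the columns of its zeros, would be a block as in (c). Likewise for columns.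
-/

variable {G : Type*} [Group G] {I Λ : Type*}

/-- Multiplication in the 0-Rees matrix semigroup `M⁰[G;I,Λ;P]` on `(I×G×Λ) ∪ {0}`.
The zero element is `none`, and a zero entry of `P` is encoded as `none`. -/
def reesMul (P : Λ → I → Option G) :
    Option (I × G × Λ) → Option (I × G × Λ) → Option (I × G × Λ)
  | some (i, x, l), some (j, y, m) => (P l j).map fun p => (i, x * p * y, m)
  | _, _ => none

/-- The commuting graph of `M⁰[G;I,Λ;P]`. Its vertex set is `I×G×Λ`, the set of
non-central elements (the center is `{0}`). -/
def commGraph (P : Λ → I → Option G) : SimpleGraph (I × G × Λ) where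
  Adj a b := a ≠ b ∧ reesMul P (some a) (some b) = reesMul P (some b) (some a)
  symm := ⟨fun _ _ h => ⟨h.1.symm, h.2.symm⟩⟩
  loopless := ⟨fun _ h => h.1 rfl⟩

open Relation

theorem SimpleGraph.Reachable.mem_of_adj_closed {V : Type*} {H : SimpleGraph V} {S : Set V}
    (hS : ∀ ⦃a b⦄, H.Adj a b → a ∈ S → b ∈ S) {u v : V} (h : H.Reachable u v) (hu : u ∈ S) :
    v ∈ S := by
  rw [SimpleGraph.reachable_iff_reflTransGen] at h
  induction h with
  | refl => exact hu
  | tail _ hbc ih => exact hS hbc ih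

theorem SimpleGraph.reachable_of_reflTransGen {α V : Type*} {H : SimpleGraph V}
    {r : α → α → Prop} (f : α → V) (h : ∀ a b, r a b → H.Reachable (f a) (f b)) {a b : α}
    (hab : ReflTransGen r a b) : H.Reachable (f a) (f b) := by
  rw [SimpleGraph.reachable_eq_reflTransGen] at h ⊢
  exact ReflTransGen.lift' f h _ _ hab

theorem exists_block_of_not_reflTransGen {α β : Type*} {Z : α → β → Prop}
    (hZ : ∀ a, ∃ b, Z a b) {a₀ a₁ : α} (h : ¬ ReflTransGen (Comp Z (flip Z)) a₀ a₁) :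
    ∃ (A : Set α) (B : Set β), A.Nonempty ∧ A ≠ Set.univ ∧ B.Nonempty ∧ B ≠ Set.univ ∧
      ∀ a b, Z a b → (a ∈ A ↔ b ∈ B) := by
  set A : Set α := {a | ReflTransGen (Comp Z (flip Z)) a₀ a}
  set B : Set β := {b | ∃ a ∈ A, Z a b}
  have hclosed : ∀ a a' b, a ∈ A → Z a b → Z a' b → a' ∈ A := fun a a' b ha hab ha'b =>
    ReflTransGen.tail ha ⟨b, hab, ha'b⟩
  obtain ⟨b₀, hb₀⟩ := hZ a₀
  obtain ⟨b₁, hb₁⟩ := hZ a₁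
  have hb₁ : b₁ ∉ B := fun ⟨a, ha, hab₁⟩ => h (hclosed a a₁ b₁ ha hab₁ hb₁)
  refine ⟨A, B, ⟨a₀, .refl⟩, (Set.ne_univ_iff_exists_notMem A).2 ⟨a₁, h⟩,
    ⟨b₀, a₀, .refl, hb₀⟩, (Set.ne_univ_iff_exists_notMem B).2 ⟨b₁, hb₁⟩, fun a b hab => ?_⟩
  exact ⟨fun ha => ⟨a, ha, hab⟩, fun ⟨a', ha', ha'b⟩ => hclosed a' a b ha' ha'b hab⟩

variable {P : Λ → I → Option G}

theorem commGraph_adj_of_eq_none {i j : I} {x y : G} {l m : Λ} (hlj : P l j = none)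
    (hmi : P m i = none) (hne : (i, x, l) ≠ (j, y, m)) : (commGraph P).Adj (i, x, l) (j, y, m) :=
  ⟨hne, by simp only [reesMul, hlj, hmi, Option.map_none]⟩

theorem commGraph_reachable_of_eq_none {i j : I} {x y : G} {l m : Λ} (hlj : P l j = none)
    (hmi : P m i = none) : (commGraph P).Reachable (i, x, l) (j, y, m) := by
  by_cases h : (i, x, l) = (j, y, m)
  · rw [h]
  · exact (commGraph_adj_of_eq_none hlj hmi h).reachable

theorem commGraph_reachable_of_common_zeros {i i' j : I} {x x' : G} {l l' m : Λ}
    (hlj : P l j = none) (hl'j : P l' j = none) (hmi : P m i = none) (hmi' : P m i' = none) :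
    (commGraph P).Reachable (i, x, l) (i', x', l') :=
  (commGraph_reachable_of_eq_none (y := 1) hlj hmi).trans
    (commGraph_reachable_of_eq_none hl'j hmi').symm

theorem eq_none_and_eq_none_or_of_commGraph_adj {i j : I} {x y : G} {l m : Λ}
    (h : (commGraph P).Adj (i, x, l) (j, y, m)) :
    (P l j = none ∧ P m i = none) ∨ (i = j ∧ l = m) := by
  have hcomm := h.2
  simp only [reesMul] at hcomm
  rcases hlj : P l j with _ | p <;> rcases hmi : P m i with _ | q <;> simp_all

theorem mem_rect_of_commGraph_connected (hconn : (commGraph P).Connected) {I' : Set I}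
    {Λ' : Set Λ} (hclosed : ∀ i ∈ I', ∀ l ∈ Λ', ∀ j m, P l j = none → P m i = none →
      j ∈ I' ∧ m ∈ Λ') {i : I} {l : Λ} (hi : i ∈ I') (hl : l ∈ Λ') (j : I) (m : Λ) :
    j ∈ I' ∧ m ∈ Λ' := by
  refine (hconn.preconnected (i, 1, l) (j, 1, m)).mem_of_adj_closed
    (S := {v | v.1 ∈ I' ∧ v.2.2 ∈ Λ'}) ?_ ⟨hi, hl⟩
  rintro ⟨a, xa, la⟩ ⟨b, xb, lb⟩ hadj ⟨ha, hla⟩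
  rcases eq_none_and_eq_none_or_of_commGraph_adj hadj with ⟨hlb, hma⟩ | ⟨rfl, rfl⟩
  · exact hclosed a ha la hla b lb hlb hma
  · exact ⟨ha, hla⟩

theorem exists_eq_none_row_of_commGraph_connected {i₀ : I} {l₀ : Λ}
    (hconn : (commGraph P).Connected) (h₀ : P l₀ i₀ = none) (l : Λ) : ∃ i, P l i = none := by
  by_contra! hl
  have hclosed : ∀ i ∈ (Set.univ : Set I), ∀ l' ∈ ({l} : Set Λ), ∀ j m,
      P l' j = none → P m i = none → j ∈ Set.univ ∧ m ∈ ({l} : Set Λ) := by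
    rintro i - l' rfl j m hlj -
    exact absurd hlj (hl j)
  obtain ⟨-, rfl⟩ := mem_rect_of_commGraph_connected hconn hclosed (Set.mem_univ i₀) rfl i₀ l₀
  exact hl i₀ h₀

theorem exists_eq_none_col_of_commGraph_connected {i₀ : I} {l₀ : Λ}
    (hconn : (commGraph P).Connected) (h₀ : P l₀ i₀ = none) (i : I) : ∃ l, P l i = none := by
  by_contra! hi
  have hclosed : ∀ i' ∈ ({i} : Set I), ∀ l ∈ (Set.univ : Set Λ), ∀ j m,
      P l j = none → P m i' = none → j ∈ ({i} : Set I) ∧ m ∈ Set.univ := by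
    rintro i' rfl l - j m - hmi
    exact absurd hmi (hi m)
  obtain ⟨rfl, -⟩ := mem_rect_of_commGraph_connected hconn hclosed rfl (Set.mem_univ l₀) i₀ l₀
  exact hi l₀ h₀

theorem not_exists_block_of_commGraph_connected (hconn : (commGraph P).Connected) :
    ¬ ∃ (I' : Set I) (Λ' : Set Λ),
      I'.Nonempty ∧ I' ≠ Set.univ ∧ Λ'.Nonempty ∧ Λ' ≠ Set.univ ∧
      ∀ (i : I) (l : Λ), ((i ∈ I' ∧ l ∉ Λ') ∨ (i ∉ I' ∧ l ∈ Λ')) → P l i ≠ none := by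
  rintro ⟨I', Λ', ⟨i, hi⟩, hI', ⟨l, hl⟩, -, hcross⟩
  obtain ⟨j, hj⟩ := (Set.ne_univ_iff_exists_notMem I').1 hI'
  refine hj (mem_rect_of_commGraph_connected hconn ?_ hi hl j l).1
  intro i hi l hl j m hlj hmi
  constructor
  · by_contra hj
    exact hcross j l (Or.inr ⟨hj, hl⟩) hlj
  · by_contra hm
    exact hcross i m (Or.inl ⟨hi, hm⟩) hmi

theorem commGraph_connected_of_reflTransGen [Nonempty I] [Nonempty Λ]
    (hrow : ∀ l : Λ, ∃ i : I, P l i = none) (hcol : ∀ i : I, ∃ l : Λ, P l i = none)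
    (hΛ : ∀ l m, ReflTransGen (Comp (fun l i => P l i = none) (flip fun l i => P l i = none)) l m)
    (hI : ∀ i j, ReflTransGen (Comp (fun i l => P l i = none) (flip fun i l => P l i = none)) i j) :
    (commGraph P).Connected := by
  refine (SimpleGraph.connected_iff _).2 ⟨?_, inferInstance⟩
  rintro ⟨i, x, l⟩ ⟨j, y, m⟩
  obtain ⟨m₀, hm₀⟩ := hcol i
  obtain ⟨m₁, hm₁⟩ := hcol j
  obtain ⟨j₀, hj₀⟩ := hrow m
  have move_row : (commGraph P).Reachable (i, x, l) (i, x, m) :=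
    SimpleGraph.reachable_of_reflTransGen (fun l => (i, x, l))
      (fun _ _ ⟨_, hak, hbk⟩ => commGraph_reachable_of_common_zeros hak hbk hm₀ hm₀) (hΛ l m)
  have move_col : (commGraph P).Reachable (i, x, m) (j, x, m) :=
    SimpleGraph.reachable_of_reflTransGen (fun i => (i, x, m))
      (fun _ _ ⟨_, hak, hbk⟩ => commGraph_reachable_of_common_zeros hj₀ hj₀ hak hbk) (hI i j)
  have move_group : (commGraph P).Reachable (j, x, m) (j, y, m) :=
    commGraph_reachable_of_common_zeros hj₀ hj₀ hm₁ hm₁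
  exact (move_row.trans move_col).trans move_group

theorem stmt_9_general (P : Λ → I → Option G)
    (hzero : ∃ (i : I) (l : Λ), P l i = none) :
    (commGraph P).Connected ↔
      ((∀ l : Λ, ∃ i : I, P l i = none) ∧
       (∀ i : I, ∃ l : Λ, P l i = none) ∧
       ¬ ∃ (I' : Set I) (Λ' : Set Λ),
          I'.Nonempty ∧ I' ≠ Set.univ ∧ Λ'.Nonempty ∧ Λ' ≠ Set.univ ∧
          ∀ (i : I) (l : Λ),
            ((i ∈ I' ∧ l ∉ Λ') ∨ (i ∉ I' ∧ l ∈ Λ')) → P l i ≠ none) := by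
  obtain ⟨i₀, l₀, h₀⟩ := hzero
  refine ⟨fun hconn => ⟨exists_eq_none_row_of_commGraph_connected hconn h₀,
    exists_eq_none_col_of_commGraph_connected hconn h₀,
    not_exists_block_of_commGraph_connected hconn⟩, ?_⟩
  rintro ⟨hrow, hcol, hblock⟩
  have no_split : ∀ (I' : Set I) (Λ' : Set Λ), I'.Nonempty → I' ≠ Set.univ → Λ'.Nonempty →
      Λ' ≠ Set.univ → (∀ i l, P l i = none → (i ∈ I' ↔ l ∈ Λ')) → False :=
    fun I' Λ' hI hI' hΛ hΛ' hsplit => hblock ⟨I', Λ', hI, hI', hΛ, hΛ', fun i l hil hz => by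
      have := hsplit i l hz
      tauto⟩
  have : Nonempty I := ⟨i₀⟩
  have : Nonempty Λ := ⟨l₀⟩
  refine commGraph_connected_of_reflTransGen hrow hcol (fun l m => ?_) (fun i j => ?_)
  · by_contra h
    obtain ⟨A, B, hA, hA', hB, hB', hAB⟩ := exists_block_of_not_reflTransGen hrow h
    exact no_split B A hB hB' hA hA' fun i l hz => (hAB l i hz).symm
  · by_contra h
    obtain ⟨A, B, hA, hA', hB, hB', hAB⟩ := exists_block_of_not_reflTransGen hcol h
    exact no_split A B hA hA' hB hB' hAB

/-- `C(M⁰[G;I,Λ;P])` is connected iff: every row of `P` contains a zero entry, every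
column of `P` contains a zero entry, and there is no "block decomposition", i.e. no proper
nonempty subsets `I' ⊆ I`, `Λ' ⊆ Λ` such that `p_{λi} ≠ 0` whenever `i ∈ I', λ ∉ Λ'` or
`i ∉ I', λ ∈ Λ'`. -/
theorem stmt_9 [Fintype G] [Fintype I] [Fintype Λ] (P : Λ → I → Option G)
    (hrow : ∀ l : Λ, ∃ i : I, P l i ≠ none)
    (hcol : ∀ i : I, ∃ l : Λ, P l i ≠ none)
    (hzero : ∃ (i : I) (l : Λ), P l i = none) :
    (commGraph P).Connected ↔
      ((∀ l : Λ, ∃ i : I, P l i = none) ∧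
       (∀ i : I, ∃ l : Λ, P l i = none) ∧
       ¬ ∃ (I' : Set I) (Λ' : Set Λ),
          I'.Nonempty ∧ I' ≠ Set.univ ∧ Λ'.Nonempty ∧ Λ' ≠ Set.univ ∧
          ∀ (i : I) (l : Λ),
            ((i ∈ I' ∧ l ∉ Λ') ∨ (i ∉ I' ∧ l ∈ Λ')) → P l i ≠ none) :=
  stmt_9_general P hzero
end

section
/- Let G be a finite group, I and Λ finite index sets, and P a regular Λ×I matrix with entries in G⁰ containing at least one zero entry. Suppose λ ∈ Λ is such that row λ of P contains no zero entry, or i ∈ I is such that column i of P contains no zero entry. Then for every i ∈ I (respectively, every λ ∈ Λ), the subgraph of C(M⁰[G;I,Λ;P]) induced by {i}×G×{λ} is a connected component of C(M⁰[G;I,Λ;P]), and the diameter of this connected component equals 0 if G is trivial, 1 if G is abelian and non-trivial, and 2 if G is non-abelian. -/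
variable {G : Type*} [Group G] {I Λ : Type*}

/-!
Let `p = P l i ≠ 0`. Inside the fibre `{i} × G × {l}` the product is
`(i, x, l) (i, y, l) = (i, x p y, l)`, so these two commute iff `x p` and `y p` commute in `G`.
Through `x ↦ x p` the fibre thus carries the graph of commuting pairs of distinct elements of `G`,
in which `1`, i.e. the vertex `(i, p⁻¹, l)`, is adjacent to everything; this gives diameter
`0`, `1` or `2` according as `G` is trivial, abelian and non-trivial, or non-abelian.
A row `l` or a column `i` of `P` without zeros makes the fibre a union of components: if
`(i, x, l)` commutes with `(j, y, m)`, one of the two products is non-zero, hence so is the other,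
and comparing them gives `j = i` and `m = l`.
-/

namespace SimpleGraph

variable {V : Type*} {Γ : SimpleGraph V}

lemma supp_connectedComponentMk_eq {S : Set V} {c : V} (hc : c ∈ S)
    (hclosed : ∀ u w, u ∈ S → Γ.Adj u w → w ∈ S) (hreach : ∀ w ∈ S, Γ.Reachable c w) :
    (Γ.connectedComponentMk c).supp = S := by
  ext w
  rw [ConnectedComponent.mem_supp_iff, ConnectedComponent.eq]
  refine ⟨fun hwc => ?_, fun hw => (hreach w hw).symm⟩
  obtain ⟨walk⟩ := hwc.symm
  clear hwc hreach
  induction walk with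
  | nil => exact hc
  | cons hadj _ ih => exact ih (hclosed _ _ hc hadj)

lemma diam_eq_two_of_eccent_le_one [Nontrivial V] {c : V} (hc : Γ.eccent c ≤ 1)
    (hΓ : Γ ≠ ⊤) : Γ.diam = 2 := by
  have hle : Γ.ediam ≤ 2 :=
    calc Γ.ediam ≤ 2 * Γ.eccent c := Γ.ediam_le_two_mul_eccent c
      _ ≤ 2 * 1 := by gcongr
      _ = 2 := mul_one 2
  have hne_top : Γ.ediam ≠ ⊤ := ne_top_of_le_ne_top (by decide) hle
  have h0 : Γ.diam ≠ 0 := Γ.diam_ne_zero_of_ediam_ne_top hne_top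
  have h1 : Γ.diam ≠ 1 := fun h => hΓ (Γ.diam_eq_one.mp h)
  have h2 : Γ.diam ≤ 2 := ENat.toNat_le_of_le_natCast hle
  omega

end SimpleGraph

open SimpleGraph

section ReesFiber

variable {P : Λ → I → Option G} {i : I} {l : Λ} {p : G}

lemma commGraph_adj_mk_iff (hp : P l i = some p) (x y : G) :
    (commGraph P).Adj (i, x, l) (i, y, l) ↔ x ≠ y ∧ Commute (x * p) (y * p) := by
  simp [commGraph, reesMul, hp, Commute, SemiconjBy, ← mul_assoc]

lemma eq_of_commGraph_adj {j : I} {m : Λ} {x y : G}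
    (hadj : (commGraph P).Adj (i, x, l) (j, y, m)) (h : P l j ≠ none ∨ P m i ≠ none) :
    j = i ∧ m = l := by
  have e := hadj.2
  simp only [reesMul] at e
  rcases hq : P l j with _ | q <;> rcases hr : P m i with _ | r <;> simp_all

lemma commGraph_adj_inv_mk (hp : P l i = some p) {x : G} (hx : p⁻¹ ≠ x) :
    (commGraph P).Adj (i, p⁻¹, l) (i, x, l) :=
  (commGraph_adj_mk_iff hp _ _).2 ⟨hx, by simp⟩

lemma supp_connectedComponentMk_fiber (hp : P l i = some p)
    (h : (∀ j, P l j ≠ none) ∨ (∀ m, P m i ≠ none)) :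
    ((commGraph P).connectedComponentMk (i, p⁻¹, l)).supp =
      {v : I × G × Λ | v.1 = i ∧ v.2.2 = l} := by
  refine supp_connectedComponentMk_eq ⟨rfl, rfl⟩ ?_ ?_
  · rintro ⟨j, x, m⟩ ⟨k, y, n⟩ ⟨rfl, rfl⟩ hadj
    exact eq_of_commGraph_adj hadj (h.imp (· k) (· n))
  · rintro ⟨j, x, m⟩ ⟨rfl, rfl⟩
    by_cases hx : p⁻¹ = x
    · rw [hx]
    · exact (commGraph_adj_inv_mk hp hx).reachable

def fiberEquiv (i : I) (l : Λ) : G ≃ {v : I × G × Λ | v.1 = i ∧ v.2.2 = l} where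
  toFun x := ⟨(i, x, l), rfl, rfl⟩
  invFun v := v.1.2.1
  left_inv _ := rfl
  right_inv := by rintro ⟨⟨j, x, m⟩, rfl, rfl⟩; rfl

lemma induce_fiber_adj_iff (hp : P l i = some p) (x y : G) :
    ((commGraph P).induce {v : I × G × Λ | v.1 = i ∧ v.2.2 = l}).Adj
      (fiberEquiv i l x) (fiberEquiv i l y) ↔ x ≠ y ∧ Commute (x * p) (y * p) :=
  commGraph_adj_mk_iff hp x y

lemma diam_induce_fiber_eq_zero [Subsingleton G] :
    ((commGraph P).induce {v : I × G × Λ | v.1 = i ∧ v.2.2 = l}).diam = 0 :=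
  diam_eq_zero.mpr (Or.inr (fiberEquiv i l).symm.subsingleton)

lemma diam_induce_fiber_eq_one [Nontrivial G] (hp : P l i = some p)
    (hcomm : ∀ a b : G, Commute a b) :
    ((commGraph P).induce {v : I × G × Λ | v.1 = i ∧ v.2.2 = l}).diam = 1 := by
  have : Nontrivial {v : I × G × Λ | v.1 = i ∧ v.2.2 = l} := (fiberEquiv i l).symm.nontrivial
  rw [diam_eq_one]
  ext u v
  obtain ⟨x, rfl⟩ := (fiberEquiv i l).surjective u
  obtain ⟨y, rfl⟩ := (fiberEquiv i l).surjective v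
  rw [induce_fiber_adj_iff hp, top_adj, (fiberEquiv i l).injective.ne_iff]
  exact and_iff_left (hcomm _ _)

lemma diam_induce_fiber_eq_two (hp : P l i = some p) {a b : G} (hab : ¬Commute a b) :
    ((commGraph P).induce {v : I × G × Λ | v.1 = i ∧ v.2.2 = l}).diam = 2 := by
  set e := fiberEquiv (G := G) i l
  have hne : a * p⁻¹ ≠ b * p⁻¹ := by
    intro hba
    exact hab (mul_right_cancel hba ▸ Commute.refl b)
  have : Nontrivial {v : I × G × Λ | v.1 = i ∧ v.2.2 = l} :=
    nontrivial_of_ne _ _ (e.injective.ne hne)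
  refine diam_eq_two_of_eccent_le_one (c := e p⁻¹) ?_ ?_
  · rw [eccent_le_one_iff]
    intro v hv
    obtain ⟨y, rfl⟩ := e.surjective v
    exact (induce_fiber_adj_iff hp _ _).2 ⟨e.injective.ne_iff.1 hv, by simp⟩
  · intro htop
    have hadj := (top_adj (e (a * p⁻¹)) (e (b * p⁻¹))).2 (e.injective.ne hne)
    rw [← htop, induce_fiber_adj_iff hp] at hadj
    exact hab (by simpa using hadj.2)

end ReesFiber

theorem stmt_10_general (P : Λ → I → Option G)
    (i : I) (l : Λ)
    (h : (∀ i' : I, P l i' ≠ none) ∨ (∀ l' : Λ, P l' i ≠ none)) :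
    (∃ c : (commGraph P).ConnectedComponent,
        c.supp = {v : I × G × Λ | v.1 = i ∧ v.2.2 = l}) ∧
    ((∀ x : G, x = 1) →
      ((commGraph P).induce {v : I × G × Λ | v.1 = i ∧ v.2.2 = l}).diam = 0) ∧
    ((∀ a b : G, a * b = b * a) → (∃ x : G, x ≠ 1) →
      ((commGraph P).induce {v : I × G × Λ | v.1 = i ∧ v.2.2 = l}).diam = 1) ∧
    (¬ (∀ a b : G, a * b = b * a) →
      ((commGraph P).induce {v : I × G × Λ | v.1 = i ∧ v.2.2 = l}).diam = 2) := by
  obtain ⟨p, hp⟩ := Option.ne_none_iff_exists'.mp (h.elim (· i) (· l))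
  refine ⟨⟨_, supp_connectedComponentMk_fiber hp h⟩, fun htriv => ?_, fun hcomm hnt => ?_,
    fun hncomm => ?_⟩
  · have := subsingleton_of_forall_eq 1 htriv
    exact diam_induce_fiber_eq_zero
  · obtain ⟨x, hx⟩ := hnt
    have := nontrivial_of_ne x 1 hx
    exact diam_induce_fiber_eq_one hp hcomm
  · obtain ⟨a, b, hab⟩ : ∃ a b : G, ¬Commute a b := by
      simpa only [not_forall, Commute, SemiconjBy] using hncomm
    exact diam_induce_fiber_eq_two hp hab

/-- If row `λ` of `P` contains no zero entry, or column `i` of `P` contains no zero entry,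
then the subgraph of `C(M⁰[G;I,Λ;P])` induced by `{i}×G×{λ}` is a connected component,
whose diameter is `0` if `G` is trivial, `1` if `G` is abelian and non-trivial, and `2` if
`G` is non-abelian. -/
theorem stmt_10 [Fintype G] [Fintype I] [Fintype Λ] (P : Λ → I → Option G)
    (hrow : ∀ l : Λ, ∃ i : I, P l i ≠ none)
    (hcol : ∀ i : I, ∃ l : Λ, P l i ≠ none)
    (hzero : ∃ (i : I) (l : Λ), P l i = none)
    (i : I) (l : Λ)
    (h : (∀ i' : I, P l i' ≠ none) ∨ (∀ l' : Λ, P l' i ≠ none)) :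
    (∃ c : (commGraph P).ConnectedComponent,
        c.supp = {v : I × G × Λ | v.1 = i ∧ v.2.2 = l}) ∧
    ((∀ x : G, x = 1) →
      ((commGraph P).induce {v : I × G × Λ | v.1 = i ∧ v.2.2 = l}).diam = 0) ∧
    ((∀ a b : G, a * b = b * a) → (∃ x : G, x ≠ 1) →
      ((commGraph P).induce {v : I × G × Λ | v.1 = i ∧ v.2.2 = l}).diam = 1) ∧
    (¬ (∀ a b : G, a * b = b * a) →
      ((commGraph P).induce {v : I × G × Λ | v.1 = i ∧ v.2.2 = l}).diam = 2) :=
  stmt_10_general P i l h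
end

section
/- Let G be a finite group, I and Λ finite index sets, and P a regular Λ×I matrix with entries in G⁰ containing at least one zero entry. Assume it is not the case that G is abelian, D₃ is a ↔-submatrix of the zero-pattern of P and none of O_{1×3}, O_{3×1}, O_{2×2} is a ↔-submatrix of the zero-pattern of P; and assume it is not the case that G is abelian, D₂ is a ↔-submatrix of the zero-pattern of P and neither O_{1×2} nor O_{2×1} is a ↔-submatrix of the zero-pattern of P. Then the clique number of C(M⁰[G;I,Λ;P]) equals |G| · max{ n·m : n,m ≥ 1 and O_{n×m} is a ↔-submatrix of the zero-pattern of P }. -/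
variable {G : Type*} [Group G] {I Λ : Type*}

/-- The all-zeros matrix `O_{n×m}` is a ↔-submatrix of the zero-pattern of `P`. -/
def OSub (P : Λ → I → Option G) (n m : ℕ) : Prop :=
  ∃ (Λ' : Finset Λ) (I' : Finset I), Λ'.card = n ∧ I'.card = m ∧
    ∀ l ∈ Λ', ∀ i ∈ I', P l i = none

/-- The matrix `D_k` (the `k×k` matrix with non-zero diagonal entries and zeros elsewhere)
is a ↔-submatrix of the zero-pattern of `P`. -/
def DSub (P : Λ → I → Option G) (k : ℕ) : Prop :=
  ∃ (f : Fin k → I) (g : Fin k → Λ), Function.Injective f ∧ Function.Injective g ∧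
    (∀ j, P (g j) (f j) ≠ none) ∧ ∀ j j', j ≠ j' → P (g j) (f j') = none

/-!
Two elements `(i,x,λ)`, `(j,y,μ)` of `M⁰[G;I,Λ;P]` in different positions `(i,λ) ≠ (j,μ)`
commute iff `p_{λj} = p_{μi} = 0`. So in a clique any two distinct occupied positions
`(i,λ)`, `(j,μ)` have `p_{λj} = 0`; in particular a position with `p_{λi} ≠ 0` is alone in its
row and column. Each position holds at most `|G|` vertices of the clique, and a position with
`p_{λi} = p ≠ 0` holds a set `X` with `Xp` commutative, so at most `|G|/2` vertices when `G` is
non-abelian. If some occupied position is a zero of `P`, the rows of the zero positions and the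
columns of all positions span a zero block with at least as many cells as there are positions.
Otherwise the `k` positions form a copy of `D_k`, and splitting them into `a` and `k - a` gives a
zero block `O_{a×(k-a)}`; its area `a(k-a)` beats `k` (or `k/2` for non-abelian `G`) except when
`k ∈ {2, 3}` and `G` is abelian, the two excluded cases. Conversely a zero block `Λ' × I'` gives
the commutative set `I' × G × Λ'`.
-/

open Finset

def cell {α : Type*} (v : I × α × Λ) : I × Λ := (v.1, v.2.2)

section ZeroPattern

variable {α : Type*} {P : Λ → I → Option α}

def zeroBlockAreas (P : Λ → I → Option α) : Set ℕ :=
  {k : ℕ | ∃ n m : ℕ, 1 ≤ n ∧ 1 ≤ m ∧ OSub P n m ∧ k = n * m}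

theorem zeroBlockAreas_bddAbove [Fintype I] [Fintype Λ] : BddAbove (zeroBlockAreas P) := by
  refine ⟨Fintype.card Λ * Fintype.card I, ?_⟩
  rintro _ ⟨n, m, -, -, ⟨Λ', I', rfl, rfl, -⟩, rfl⟩
  exact Nat.mul_le_mul (card_le_univ Λ') (card_le_univ I')

theorem le_sSup_zeroBlockAreas [Fintype I] [Fintype Λ] {n m : ℕ} (hn : 1 ≤ n) (hm : 1 ≤ m)
    (h : OSub P n m) : n * m ≤ sSup (zeroBlockAreas P) :=
  le_csSup zeroBlockAreas_bddAbove ⟨n, m, hn, hm, h, rfl⟩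

theorem one_mem_zeroBlockAreas (hzero : ∃ i l, P l i = none) : 1 ∈ zeroBlockAreas P := by
  obtain ⟨i, l, h⟩ := hzero
  exact ⟨1, 1, le_rfl, le_rfl, ⟨{l}, {i}, rfl, rfl, by simpa using h⟩, rfl⟩

theorem one_le_sSup_zeroBlockAreas [Fintype I] [Fintype Λ] (hzero : ∃ i l, P l i = none) :
    1 ≤ sSup (zeroBlockAreas P) :=
  le_csSup zeroBlockAreas_bddAbove (one_mem_zeroBlockAreas hzero)

/-- Any two distinct positions `(i,λ)`, `(j,μ)` in `C` have `p_{λj} = 0`. -/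
def CrossZero (P : Λ → I → Option α) (C : Finset (I × Λ)) : Prop :=
  (C : Set (I × Λ)).Pairwise fun c d => P c.2 d.1 = none

namespace CrossZero

variable {C : Finset (I × Λ)} {c d : I × Λ}

theorem eq_of_fst_eq (hC : CrossZero P C) (hc : c ∈ C) (hd : d ∈ C) (hP : P c.2 c.1 ≠ none)
    (h : d.1 = c.1) : d = c := by
  by_contra hne
  exact hP (h ▸ hC hc hd (Ne.symm hne))

theorem eq_of_snd_eq (hC : CrossZero P C) (hc : c ∈ C) (hd : d ∈ C) (hP : P c.2 c.1 ≠ none)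
    (h : d.2 = c.2) : d = c := by
  by_contra hne
  exact hP (h ▸ hC hd hc hne)

theorem oSub [DecidableEq I] [DecidableEq Λ] {A B : Finset (I × Λ)} (hC : CrossZero P C)
    (hA : A ⊆ C) (hB : B ⊆ C) (hAB : ∀ c ∈ A, c ∈ B → P c.2 c.1 = none) :
    OSub P #(A.image Prod.snd) #(B.image Prod.fst) := by
  refine ⟨_, _, rfl, rfl, ?_⟩
  simp only [mem_image]
  rintro _ ⟨c, hc, rfl⟩ _ ⟨d, hd, rfl⟩
  by_cases hcd : c = d
  · subst hcd
    exact hAB c hc hd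
  · exact hC (hA hc) (hB hd) hcd

theorem oSub_sdiff [DecidableEq I] [DecidableEq Λ] {A : Finset (I × Λ)} (hC : CrossZero P C)
    (hnz : ∀ c ∈ C, P c.2 c.1 ≠ none) (hA : A ⊆ C) : OSub P #A #(C \ A) := by
  have h := hC.oSub hA sdiff_subset fun c hc hc' => absurd hc (mem_sdiff.1 hc').2
  rwa [card_image_of_injOn, card_image_of_injOn] at h
  · intro c hc d hd h
    have hd := (mem_sdiff.1 hd).1
    exact hC.eq_of_fst_eq hd (mem_sdiff.1 hc).1 (hnz d hd) h
  · intro c hc d hd h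
    exact hC.eq_of_snd_eq (hA hd) (hA hc) (hnz d (hA hd)) h

theorem dSub (hC : CrossZero P C) (hnz : ∀ c ∈ C, P c.2 c.1 ≠ none) : DSub P #C := by
  let e := C.equivFin.symm
  have hne {j j' : Fin #C} (h : j ≠ j') : (e j : I × Λ) ≠ e j' :=
    fun h' => h (e.injective (Subtype.ext h'))
  refine ⟨fun j => (e j : I × Λ).1, fun j => (e j : I × Λ).2, ?_, ?_,
    fun j => hnz _ (e j).2, fun j j' h => hC (e j).2 (e j').2 (hne h)⟩
  · intro j j' h
    by_contra h'
    exact hne h' (hC.eq_of_fst_eq (e j').2 (e j).2 (hnz _ (e j').2) h)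
  · intro j j' h
    by_contra h'
    exact hne h' (hC.eq_of_snd_eq (e j').2 (e j).2 (hnz _ (e j').2) h)

variable [Fintype I] [Fintype Λ]

theorem card_le_sSup_of_eq_none (hC : CrossZero P C) (hc : c ∈ C) (hP : P c.2 c.1 = none) :
    #C ≤ sSup (zeroBlockAreas P) := by
  classical
  let Z := C.filter fun d => P d.2 d.1 = none
  have hO : OSub P #(Z.image Prod.snd) #(C.image Prod.fst) :=
    hC.oSub (filter_subset _ _) Subset.rfl fun d hd _ => (mem_filter.1 hd).2
  have hcZ : c ∈ Z := mem_filter.2 ⟨hc, hP⟩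
  -- A zero position `d` goes to `(d.2, d.1)`; a non-zero one is alone in its column `d.1`.
  let f : I × Λ → Λ × I := fun d => (if P d.2 d.1 = none then d.2 else c.2, d.1)
  have hf : Set.InjOn f C := by
    intro d hd d' hd' h
    obtain ⟨h2, h1⟩ := Prod.mk.inj h
    by_cases hdz : P d.2 d.1 = none
    · by_cases hdz' : P d'.2 d'.1 = none
      · simp only [hdz, hdz', if_true] at h2
        exact Prod.ext h1 h2
      · exact hC.eq_of_fst_eq hd' hd hdz' h1
    · exact (hC.eq_of_fst_eq hd hd' hdz h1.symm).symm
  calc #C ≤ #(Z.image Prod.snd ×ˢ C.image Prod.fst) := by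
        refine card_le_card_of_injOn f (fun d hd => ?_) hf
        simp only [coe_product, Set.mem_prod, mem_coe, mem_image]
        refine ⟨?_, d, hd, rfl⟩
        by_cases hdz : P d.2 d.1 = none
        · exact ⟨d, mem_filter.2 ⟨hd, hdz⟩, by simp [f, hdz]⟩
        · exact ⟨c, hcZ, by simp [f, hdz]⟩
    _ = #(Z.image Prod.snd) * #(C.image Prod.fst) := card_product _ _
    _ ≤ sSup (zeroBlockAreas P) :=
        le_sSup_zeroBlockAreas (card_pos.2 ⟨_, mem_image_of_mem _ hcZ⟩)
          (card_pos.2 ⟨_, mem_image_of_mem _ hc⟩) hO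

theorem mul_le_sSup (hC : CrossZero P C) (hnz : ∀ c ∈ C, P c.2 c.1 ≠ none) {a : ℕ}
    (ha : 1 ≤ a) (haC : a < #C) : a * (#C - a) ≤ sSup (zeroBlockAreas P) := by
  classical
  obtain ⟨A, hAC, rfl⟩ := exists_subset_card_eq haC.le
  have h := hC.oSub_sdiff hnz hAC
  rw [card_sdiff_of_subset hAC] at h
  exact le_sSup_zeroBlockAreas ha (by omega) h

theorem card_le_two_mul_sSup (hC : CrossZero P C) (hnz : ∀ c ∈ C, P c.2 c.1 ≠ none)
    (hM : 1 ≤ sSup (zeroBlockAreas P)) : #C ≤ 2 * sSup (zeroBlockAreas P) := by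
  rcases le_or_gt #C 1 with h | h
  · omega
  · have := hC.mul_le_sSup hnz le_rfl h
    omega

theorem card_le_sSup (hC : CrossZero P C) (hnz : ∀ c ∈ C, P c.2 c.1 ≠ none)
    (hM : 1 ≤ sSup (zeroBlockAreas P))
    (h2 : DSub P 2 → OSub P 1 2 ∨ OSub P 2 1)
    (h3 : DSub P 3 → OSub P 1 3 ∨ OSub P 3 1 ∨ OSub P 2 2) :
    #C ≤ sSup (zeroBlockAreas P) := by
  have hD := hC.dSub hnz
  obtain hk | hk | hk | hk : #C ≤ 1 ∨ #C = 2 ∨ #C = 3 ∨ 4 ≤ #C := by omega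
  · omega
  · rw [hk] at hD ⊢
    rcases h2 hD with h | h
    · exact le_sSup_zeroBlockAreas (n := 1) (m := 2) le_rfl (by norm_num) h
    · exact le_sSup_zeroBlockAreas (n := 2) (m := 1) (by norm_num) le_rfl h
  · rw [hk] at hD ⊢
    rcases h3 hD with h | h | h
    · exact le_sSup_zeroBlockAreas (n := 1) (m := 3) le_rfl (by norm_num) h
    · exact le_sSup_zeroBlockAreas (n := 3) (m := 1) (by norm_num) le_rfl h
    · exact le_trans (by norm_num) (le_sSup_zeroBlockAreas (n := 2) (m := 2) (by norm_num)
        (by norm_num) h)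
  · have := hC.mul_le_sSup hnz (a := 2) (by norm_num) (by omega)
    omega

end CrossZero

theorem card_filter_cell_le [Fintype α] [DecidableEq I] [DecidableEq Λ]
    (s : Finset (I × α × Λ)) (c : I × Λ) : #{v ∈ s | cell v = c} ≤ Fintype.card α := by
  refine card_le_card_of_injOn (fun v => v.2.1) (fun _ _ => mem_coe.2 (mem_univ _)) ?_
  rintro ⟨i, x, l⟩ hv ⟨j, y, m⟩ hw (rfl : x = y)
  obtain ⟨rfl, rfl⟩ := Prod.mk.inj ((mem_filter.1 hv).2.trans (mem_filter.1 hw).2.symm)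
  rfl

theorem card_le_card_mul_card_image_cell [Fintype α] [DecidableEq I] [DecidableEq Λ]
    (s : Finset (I × α × Λ)) : #s ≤ Fintype.card α * #(s.image cell) :=
  card_le_mul_card_image s _ fun c _ => card_filter_cell_le s c

end ZeroPattern

theorem two_mul_card_le_of_pairwise_commute [Finite G] (hG : ¬ ∀ a b : G, a * b = b * a)
    (T : Finset G) (hT : ∀ x ∈ T, ∀ y ∈ T, x * y = y * x) : 2 * #T ≤ Nat.card G := by
  let H := Subgroup.closure (T : Set G)
  have hH : H ≠ ⊤ := by
    intro htop
    have hcc (a : G) : a ∈ Subgroup.centralizer (Subgroup.centralizer (T : Set G) : Set G) :=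
      Subgroup.closure_le_centralizer_centralizer _ (show a ∈ H from htop ▸ Subgroup.mem_top a)
    exact hG fun a b => Set.centralizer_centralizer_comm_of_comm hT a (hcc a) b (hcc b)
  calc 2 * #T ≤ H.index * Nat.card H := by
        refine Nat.mul_le_mul (Subgroup.one_lt_index_of_ne_top hH) ?_
        exact (Set.ncard_coe_finset T).symm.trans_le
          (Set.ncard_le_ncard Subgroup.subset_closure (Set.toFinite _))
    _ = Nat.card G := by rw [mul_comm, Subgroup.card_mul_index]

section Rees

variable {P : Λ → I → Option G} {i j : I} {l m : Λ} {x y : G}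

theorem eq_none_of_reesMul_comm
    (h : reesMul P (some (i, x, l)) (some (j, y, m)) =
      reesMul P (some (j, y, m)) (some (i, x, l)))
    (hne : (i, l) ≠ (j, m)) : P l j = none := by
  cases hlj : P l j with
  | none => rfl
  | some p => cases hmi : P m i <;> simp_all [reesMul]

theorem mul_comm_of_reesMul_comm {p : G} (hp : P l i = some p)
    (h : reesMul P (some (i, x, l)) (some (i, y, l)) =
      reesMul P (some (i, y, l)) (some (i, x, l))) :
    x * p * (y * p) = y * p * (x * p) := by
  simp only [reesMul, hp, Option.map_some, Option.some.injEq, Prod.mk.injEq] at h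
  rw [← mul_assoc, h.2.1, mul_assoc]

theorem SimpleGraph.IsClique.crossZero_image_cell [DecidableEq I] [DecidableEq Λ]
    {s : Finset (I × G × Λ)} (hs : (commGraph P).IsClique (s : Set (I × G × Λ))) :
    CrossZero P (s.image cell) := by
  simp only [CrossZero, coe_image]
  rintro _ ⟨⟨i, x, l⟩, hv, rfl⟩ _ ⟨⟨j, y, m⟩, hw, rfl⟩ hne
  exact eq_none_of_reesMul_comm (hs hv hw fun h => hne (h ▸ rfl)).2 hne

theorem SimpleGraph.IsClique.two_mul_card_filter_cell_le [Fintype G] [DecidableEq I]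
    [DecidableEq Λ] (hG : ¬ ∀ a b : G, a * b = b * a) {s : Finset (I × G × Λ)}
    (hs : (commGraph P).IsClique (s : Set (I × G × Λ))) {p : G} (hp : P l i = some p) :
    2 * #{v ∈ s | cell v = (i, l)} ≤ Fintype.card G := by
  classical
  let F := {v ∈ s | cell v = (i, l)}
  have hF : ∀ v ∈ F, v ∈ s ∧ v = (i, v.2.1, l) := by
    rintro ⟨j, y, m⟩ hv
    obtain ⟨hvs, h⟩ := mem_filter.1 hv
    obtain ⟨rfl, rfl⟩ := Prod.mk.inj h
    exact ⟨hvs, rfl⟩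
  have hinj : Set.InjOn (fun v : I × G × Λ => v.2.1 * p) F := by
    intro v hv w hw h
    rw [(hF v hv).2, (hF w hw).2, mul_right_cancel h]
  have hcomm : ∀ a ∈ F.image (fun v => v.2.1 * p), ∀ b ∈ F.image (fun v => v.2.1 * p),
      a * b = b * a := by
    simp only [mem_image]
    rintro _ ⟨v, hv, rfl⟩ _ ⟨w, hw, rfl⟩
    by_cases hvw : v = w
    · rw [hvw]
    · have h := (hs (hF v hv).1 (hF w hw).1 hvw).2
      rw [(hF v hv).2, (hF w hw).2] at h
      exact mul_comm_of_reesMul_comm hp h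
  calc 2 * #F = 2 * #(F.image fun v => v.2.1 * p) := by rw [card_image_of_injOn hinj]
    _ ≤ Nat.card G := two_mul_card_le_of_pairwise_commute hG _ hcomm
    _ = Fintype.card G := Nat.card_eq_fintype_card

theorem SimpleGraph.IsClique.two_mul_card_le [Fintype G] [DecidableEq I] [DecidableEq Λ]
    (hG : ¬ ∀ a b : G, a * b = b * a) {s : Finset (I × G × Λ)}
    (hs : (commGraph P).IsClique (s : Set (I × G × Λ)))
    (hnz : ∀ c ∈ s.image cell, P c.2 c.1 ≠ none) :
    2 * #s ≤ Fintype.card G * #(s.image cell) := by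
  have h := card_le_mul_card_image (f := cell) s (Fintype.card G / 2) fun c hc => by
    obtain ⟨p, hp⟩ := Option.ne_none_iff_exists'.1 (hnz c hc)
    obtain ⟨i, l⟩ := c
    have := hs.two_mul_card_filter_cell_le (i := i) (l := l) hG hp
    omega
  calc 2 * #s ≤ 2 * (Fintype.card G / 2) * #(s.image cell) := by rw [mul_assoc]; omega
    _ ≤ Fintype.card G * #(s.image cell) := Nat.mul_le_mul_right _ (Nat.mul_div_le _ _)

theorem isClique_commGraph_product [Fintype G] [DecidableEq I] [DecidableEq Λ]
    {I' : Finset I} {Λ' : Finset Λ} (h : ∀ l ∈ Λ', ∀ i ∈ I', P l i = none) :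
    (commGraph P).IsClique (I' ×ˢ (univ : Finset G) ×ˢ Λ' : Finset (I × G × Λ)) := by
  rintro ⟨i, x, l⟩ hv ⟨j, y, m⟩ hw hne
  simp only [coe_product, Set.mem_prod, mem_coe, mem_univ, true_and] at hv hw
  refine ⟨hne, ?_⟩
  simp [reesMul, h l hv.2 j hw.1, h m hw.2 i hv.1]

end Rees

section Finite

variable [Fintype G] [Fintype I] [Fintype Λ]

theorem mul_le_cliqueNum_commGraph (P : Λ → I → Option G) {n m : ℕ} (hO : OSub P n m) :
    Fintype.card G * (n * m) ≤ (commGraph P).cliqueNum := by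
  classical
  obtain ⟨Λ', I', rfl, rfl, h⟩ := hO
  calc Fintype.card G * (#Λ' * #I') = #(I' ×ˢ (univ : Finset G) ×ˢ Λ') := by
        simp only [card_product, card_univ]
        ring
    _ ≤ _ := (isClique_commGraph_product h).card_le_cliqueNum

theorem cliqueNum_commGraph_le (P : Λ → I → Option G) (hzero : ∃ i l, P l i = none)
    (hcase1 : ¬ ((∀ a b : G, a * b = b * a) ∧ DSub P 3 ∧
        ¬ OSub P 1 3 ∧ ¬ OSub P 3 1 ∧ ¬ OSub P 2 2))
    (hcase2 : ¬ ((∀ a b : G, a * b = b * a) ∧ DSub P 2 ∧ ¬ OSub P 1 2 ∧ ¬ OSub P 2 1)) :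
    (commGraph P).cliqueNum ≤ Fintype.card G * sSup (zeroBlockAreas P) := by
  classical
  obtain ⟨s, hs⟩ := (commGraph P).exists_isNClique_cliqueNum
  rw [← hs.card_eq]
  have hC := hs.isClique.crossZero_image_cell
  have hM := one_le_sSup_zeroBlockAreas hzero
  have hcells := card_le_card_mul_card_image_cell s
  by_cases hz : ∃ c ∈ s.image cell, P c.2 c.1 = none
  · obtain ⟨c, hc, hP⟩ := hz
    exact hcells.trans (Nat.mul_le_mul_left _ (hC.card_le_sSup_of_eq_none hc hP))
  push Not at hz
  by_cases hG : ∀ a b : G, a * b = b * a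
  · have := hC.card_le_sSup hz hM (fun hD => by tauto) (fun hD => by tauto)
    exact hcells.trans (Nat.mul_le_mul_left _ this)
  · have h2 := hs.isClique.two_mul_card_le hG hz
    have := Nat.mul_le_mul_left (Fintype.card G) (hC.card_le_two_mul_sSup hz hM)
    nlinarith

end Finite

theorem stmt_14_general [Fintype G] [Fintype I] [Fintype Λ] (P : Λ → I → Option G)
    (hzero : ∃ (i : I) (l : Λ), P l i = none)
    (hcase1 : ¬ ((∀ a b : G, a * b = b * a) ∧ DSub P 3 ∧
        ¬ OSub P 1 3 ∧ ¬ OSub P 3 1 ∧ ¬ OSub P 2 2))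
    (hcase2 : ¬ ((∀ a b : G, a * b = b * a) ∧ DSub P 2 ∧
        ¬ OSub P 1 2 ∧ ¬ OSub P 2 1)) :
    (commGraph P).cliqueNum =
      Fintype.card G *
        sSup {k : ℕ | ∃ n m : ℕ, 1 ≤ n ∧ 1 ≤ m ∧ OSub P n m ∧ k = n * m} := by
  change _ = _ * sSup (zeroBlockAreas P)
  refine le_antisymm (cliqueNum_commGraph_le P hzero hcase1 hcase2) ?_
  obtain ⟨n, m, -, -, hO, hM⟩ :=
    Nat.sSup_mem ⟨1, one_mem_zeroBlockAreas hzero⟩ zeroBlockAreas_bddAbove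
  rw [hM]
  exact mul_le_cliqueNum_commGraph P hO

/-- Outside the two exceptional abelian cases, the clique number of `C(M⁰[G;I,Λ;P])` equals
`|G| · max{n·m : n,m ≥ 1 and O_{n×m} is a ↔-submatrix of the zero-pattern of P}`. -/
theorem stmt_14 [Fintype G] [Fintype I] [Fintype Λ] (P : Λ → I → Option G)
    (hrow : ∀ l : Λ, ∃ i : I, P l i ≠ none)
    (hcol : ∀ i : I, ∃ l : Λ, P l i ≠ none)
    (hzero : ∃ (i : I) (l : Λ), P l i = none)
    (hcase1 : ¬ ((∀ a b : G, a * b = b * a) ∧ DSub P 3 ∧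
        ¬ OSub P 1 3 ∧ ¬ OSub P 3 1 ∧ ¬ OSub P 2 2))
    (hcase2 : ¬ ((∀ a b : G, a * b = b * a) ∧ DSub P 2 ∧
        ¬ OSub P 1 2 ∧ ¬ OSub P 2 1)) :
    (commGraph P).cliqueNum =
      Fintype.card G *
        sSup {k : ℕ | ∃ n m : ℕ, 1 ≤ n ∧ 1 ≤ m ∧ OSub P n m ∧ k = n * m} :=
  stmt_14_general P hzero hcase1 hcase2
end
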